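/- arXiv:2501.17118 — 6 statements merged into one kernel-verified Lean document; each statement's English description precedes it below -/
import Mathlib

section
/- Let f ∈ L¹(ℝ;ℂ) and let f̂(s) = ∫_{−∞}^{∞} e^{−i·s·t} f(t) dt be its Fourier transform. Then for every s ∈ ℝ, ∫_0^s ∫_0^{σ₂} f̂(σ₁) dσ₁ dσ₂ = ∫_{−∞}^{∞} v_s(t) f(t) dt. Consequently the function s ↦ ∫_{−∞}^{∞} v_s(t) f(t) dt is twice differentiable at every s ∈ ℝ and its second derivative at s equals f̂(s). -/
/-!
Differentiate `s ↦ ∫ v s t * f t` under the integral sign twice: `∂ₛ v s t = vDeriv s t` and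
`∂ₛ vDeriv s t = exp (-I s t)`. Both kernels vanish at `s = 0`, so the mean value theorem bounds
them by `s ^ 2` and `|s|` uniformly in `t`, which is the domination needed. The function and its
derivative thus vanish at `0` and its second derivative is the continuous function `ft f`, so two
applications of the fundamental theorem of calculus give the iterated integral.
-/

open MeasureTheory Filter Topology

noncomputable def v (s t : ℝ) : ℂ :=
  if t = 0 then (s:ℂ)^2/2
  else (1 - Complex.I*(s:ℂ)*(t:ℂ) - Complex.exp (-Complex.I*(s:ℂ)*(t:ℂ)))/(t:ℂ)^2

/-- Fourier transform of an integrable function. -/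
noncomputable def ft (f : ℝ → ℂ) (s : ℝ) : ℂ :=
  ∫ t : ℝ, Complex.exp (-Complex.I*(s:ℂ)*(t:ℂ)) * f t

open Complex

section

variable {E : Type*} [NormedAddCommGroup E] [NormedSpace ℝ E]

theorem norm_le_mul_abs_of_hasDerivAt {g g' : ℝ → E} {φ : ℝ → ℝ} (hφ : Monotone φ)
    (hg : ∀ s, HasDerivAt g (g' s) s) (hg' : ∀ s, ‖g' s‖ ≤ φ |s|) (hg0 : g 0 = 0) (s : ℝ) :
    ‖g s‖ ≤ φ |s| * |s| := by
  have hs : s ∈ Metric.closedBall (0 : ℝ) |s| := by simp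
  have := (convex_closedBall (0 : ℝ) |s|).norm_image_sub_le_of_norm_hasDerivWithin_le
    (fun σ _ => (hg σ).hasDerivWithinAt)
    (fun σ hσ => (hg' σ).trans (hφ (by simpa using hσ)))
    (Metric.mem_closedBall_self (abs_nonneg s)) hs
  simpa [hg0] using this

theorem integral_integral_eq_of_hasDerivAt [CompleteSpace E] {Ω W g : ℝ → E} {a : ℝ}
    (hΩ : ∀ s, HasDerivAt Ω (W s) s) (hW : ∀ s, HasDerivAt W (g s) s) (hg : Continuous g)
    (hΩa : Ω a = 0) (hWa : W a = 0) (s : ℝ) :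
    ∫ σ₂ in a..s, ∫ σ₁ in a..σ₂, g σ₁ = Ω s := by
  have hWc : Continuous W := continuous_iff_continuousAt.2 fun σ => (hW σ).continuousAt
  have hWg : ∀ σ, ∫ σ₁ in a..σ, g σ₁ = W σ := fun σ => by
    rw [intervalIntegral.integral_eq_sub_of_hasDerivAt (fun x _ => hW x)
      (hg.intervalIntegrable _ _), hWa, sub_zero]
  simp_rw [hWg]
  rw [intervalIntegral.integral_eq_sub_of_hasDerivAt (fun x _ => hΩ x)
    (hWc.intervalIntegrable _ _), hΩa, sub_zero]

end

theorem hasDerivAt_integral_kernel_mul {α : Type*} [MeasurableSpace α] {μ : Measure α}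
    {K K' : ℝ → α → ℂ} {φ : ℝ → ℝ} {f : α → ℂ} (hf : Integrable f μ) (hφ : Monotone φ)
    (hK : ∀ s t, HasDerivAt (K · t) (K' s t) s) (hK' : ∀ s t, ‖K' s t‖ ≤ φ |s|)
    (hK0 : ∀ t, K 0 t = 0)
    (hKm : ∀ s, AEStronglyMeasurable (K s) μ) (hK'm : ∀ s, AEStronglyMeasurable (K' s) μ)
    (s : ℝ) :
    HasDerivAt (fun s => ∫ t, K s t * f t ∂μ) (∫ t, K' s t * f t ∂μ) s := by
  have hK_int : Integrable (fun t => K s t * f t) μ :=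
    (hf.norm.const_mul (φ |s| * |s|)).mono' ((hKm s).mul hf.1) (ae_of_all _ fun t => by
      rw [norm_mul]
      exact mul_le_mul_of_nonneg_right
        (norm_le_mul_abs_of_hasDerivAt hφ (hK · t) (hK' · t) (hK0 t) s) (norm_nonneg _))
  refine (hasDerivAt_integral_of_dominated_loc_of_deriv_le (Metric.ball_mem_nhds s one_pos)
    (Eventually.of_forall fun s' => (hKm s').mul hf.1) hK_int ((hK'm s).mul hf.1)
    (bound := fun t => φ (|s| + 1) * ‖f t‖) ?_ (hf.norm.const_mul _)
    (ae_of_all _ fun t s' _ => (hK s' t).mul_const (f t))).2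
  refine ae_of_all _ fun t s' hs' => ?_
  have hs's : |s'| ≤ |s| + 1 := by
    have := abs_sub_abs_le_abs_sub s' s
    rw [Metric.mem_ball, Real.dist_eq] at hs'
    linarith
  rw [norm_mul]
  exact mul_le_mul_of_nonneg_right ((hK' s' t).trans (hφ hs's)) (norm_nonneg _)

theorem norm_exp_neg_I_mul_mul (s t : ℝ) : ‖exp (-I * s * t)‖ = 1 := by
  rw [norm_exp]; simp

theorem continuous_ft {f : ℝ → ℂ} (hf : Integrable f) : Continuous (ft f) :=
  continuous_of_dominated (bound := fun t => ‖f t‖)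
    (fun s => by have := hf.1; fun_prop)
    (fun s => ae_of_all _ fun t => by rw [norm_mul, norm_exp_neg_I_mul_mul, one_mul])
    hf.norm (ae_of_all _ fun t => by fun_prop)

noncomputable def vDeriv (s t : ℝ) : ℂ :=
  if t = 0 then (s : ℂ) else -I * (1 - exp (-I * s * t)) / t

theorem hasDerivAt_const_mul_ofReal_mul (c : ℂ) (s t : ℝ) :
    HasDerivAt (fun s' : ℝ => c * s' * t) (c * t) s := by
  simpa using ((hasDerivAt_id s).ofReal_comp.const_mul c).mul_const (t : ℂ)

theorem hasDerivAt_v (s t : ℝ) : HasDerivAt (v · t) (vDeriv s t) s := by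
  by_cases ht : t = 0
  · simp only [v, vDeriv, ht, if_true]
    simpa using ((hasDerivAt_id s).ofReal_comp.pow 2).div_const (2 : ℂ)
  · have ht' : (t : ℂ) ≠ 0 := by exact_mod_cast ht
    simp only [v, vDeriv, ht, if_false]
    refine ((((hasDerivAt_const s 1).sub (hasDerivAt_const_mul_ofReal_mul I s t)).sub
      (hasDerivAt_const_mul_ofReal_mul (-I) s t).cexp).div_const _).congr_deriv ?_
    field_simp; ring

theorem hasDerivAt_vDeriv (s t : ℝ) : HasDerivAt (vDeriv · t) (exp (-I * s * t)) s := by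
  by_cases ht : t = 0
  · simpa [vDeriv, ht] using (hasDerivAt_id s).ofReal_comp
  · have ht' : (t : ℂ) ≠ 0 := by exact_mod_cast ht
    simp only [vDeriv, ht, if_false]
    refine ((((hasDerivAt_const s 1).sub (hasDerivAt_const_mul_ofReal_mul (-I) s t).cexp).const_mul
      (-I)).div_const _).congr_deriv ?_
    rw [div_eq_iff ht']
    linear_combination (-t * exp (-I * s * t)) * I_sq

theorem v_zero (t : ℝ) : v 0 t = 0 := by
  unfold v; split_ifs <;> simp

theorem vDeriv_zero (t : ℝ) : vDeriv 0 t = 0 := by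
  unfold vDeriv; split_ifs <;> simp

theorem measurable_v (s : ℝ) : Measurable (v s) := by
  unfold v; exact Measurable.ite measurableSet_eq measurable_const (by fun_prop)

theorem measurable_vDeriv (s : ℝ) : Measurable (vDeriv s) := by
  unfold vDeriv; exact Measurable.ite measurableSet_eq measurable_const (by fun_prop)

theorem norm_vDeriv_le (s t : ℝ) : ‖vDeriv s t‖ ≤ |s| := by
  simpa using norm_le_mul_abs_of_hasDerivAt (φ := fun _ => 1) monotone_const
    (hasDerivAt_vDeriv · t) (fun s => (norm_exp_neg_I_mul_mul s t).le) (vDeriv_zero t) s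

theorem stmt0 (f : ℝ → ℂ) (hf : Integrable f) :
    (∀ s : ℝ, (∫ σ₂ in (0:ℝ)..s, ∫ σ₁ in (0:ℝ)..σ₂, ft f σ₁)
        = ∫ t : ℝ, v s t * f t) ∧
    ∃ Ω' : ℝ → ℂ,
      (∀ s : ℝ, HasDerivAt (fun s' : ℝ => ∫ t : ℝ, v s' t * f t) (Ω' s) s) ∧
      (∀ s : ℝ, HasDerivAt Ω' (ft f s) s) := by
  have hΩ (s : ℝ) : HasDerivAt (fun s' => ∫ t, v s' t * f t) (∫ t, vDeriv s t * f t) s :=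
    hasDerivAt_integral_kernel_mul hf monotone_id hasDerivAt_v norm_vDeriv_le v_zero
      (fun s => (measurable_v s).aestronglyMeasurable)
      (fun s => (measurable_vDeriv s).aestronglyMeasurable) s
  have hW (s : ℝ) : HasDerivAt (fun s' => ∫ t, vDeriv s' t * f t) (ft f s) s :=
    hasDerivAt_integral_kernel_mul (φ := fun _ => 1) hf monotone_const hasDerivAt_vDeriv
      (fun s t => (norm_exp_neg_I_mul_mul s t).le) vDeriv_zero
      (fun s => (measurable_vDeriv s).aestronglyMeasurable)
      (fun s => by fun_prop) s
  refine ⟨integral_integral_eq_of_hasDerivAt hΩ hW (continuous_ft hf) ?_ ?_, _, hΩ, hW⟩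
  · simp [v_zero]
  · simp [vDeriv_zero]
end

section
/- Let F ∈ ℬ_c(ℝ) and let c = ∫_{−∞}^{∞} |v₁′(t)| dt. Then |Ω_F(s)| ≤ c·‖F‖_∞·s² for all s ∈ ℝ; in particular Ω_F(0) = 0 and Ω_F is differentiable at 0 with Ω_F′(0) = 0. -/
open MeasureTheory Filter Topology

noncomputable def vd (s t : ℝ) : ℂ :=
  if t = 0 then 0
  else (Complex.I*(s:ℂ)*Complex.exp (-Complex.I*(s:ℂ)*(t:ℂ)) - Complex.I*(s:ℂ))/(t:ℂ)^2
    - 2*(1 - Complex.I*(s:ℂ)*(t:ℂ) - Complex.exp (-Complex.I*(s:ℂ)*(t:ℂ)))/(t:ℂ)^3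

def BcR (F : ℝ → ℂ) : Prop :=
  Continuous F ∧ Tendsto F atBot (𝓝 0) ∧ ∃ L : ℂ, Tendsto F atTop (𝓝 L)

noncomputable def Om (F : ℝ → ℂ) (s : ℝ) : ℂ := -∫ t : ℝ, F t * vd s t

/-!
The scaling law `v_s'(t) = s³ v₁'(s t)` and the substitution `u = s t` give
`∫ |v_s'| = s² ∫ |v₁'|`, and `|Ω_F(s)| ≤ ‖F‖_∞ ∫ |v_s'|` yields the quadratic bound. The
integral `∫ |v₁'|` is finite because `|v₁'(t)| ≤ 12 / (1 + t²)`: writing `x = -i t`,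
`t³ v₁'(t) = (2 - x) eˣ - (2 + x)`, which is `O(|t|³)` near `0` by the third-order Taylor
expansion of `exp` (the terms up to `x²` cancel) and `O(|t|)` at infinity since `|eˣ| = 1`.
A function bounded by `C s²` vanishes at `0` together with its derivative.
-/

namespace Complex

theorem norm_exp_sub_one_sub_id_sub_sq_div_two_le {x : ℂ} (hx : ‖x‖ ≤ 1) :
    ‖exp x - 1 - x - x ^ 2 / 2‖ ≤ ‖x‖ ^ 3 :=
  calc
    ‖exp x - 1 - x - x ^ 2 / 2‖ = ‖exp x - ∑ m ∈ Finset.range 3, x ^ m / m.factorial‖ := by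
      simp [Finset.sum_range_succ, Nat.factorial, sub_sub]
    _ ≤ ‖x‖ ^ 3 * ((Nat.succ 3 : ℝ) * (Nat.factorial 3 * (3 : ℕ) : ℝ)⁻¹) :=
      exp_bound hx (by decide)
    _ ≤ ‖x‖ ^ 3 * 1 := by gcongr; norm_num [Nat.factorial]
    _ = ‖x‖ ^ 3 := mul_one _

theorem norm_two_sub_mul_exp_sub_two_add_le_of_norm_le_one {x : ℂ} (hx : ‖x‖ ≤ 1) :
    ‖(2 - x) * exp x - (2 + x)‖ ≤ 4 * ‖x‖ ^ 3 := by
  have hsplit : (2 - x) * exp x - (2 + x) =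
      (2 - x) * (exp x - 1 - x - x ^ 2 / 2) - x ^ 3 / 2 := by ring
  have h2x : ‖2 - x‖ ≤ 3 := by
    calc ‖2 - x‖ ≤ ‖(2 : ℂ)‖ + ‖x‖ := norm_sub_le _ _
      _ ≤ 3 := by norm_num; linarith
  calc ‖(2 - x) * exp x - (2 + x)‖
      ≤ ‖2 - x‖ * ‖exp x - 1 - x - x ^ 2 / 2‖ + ‖x‖ ^ 3 / 2 := by
        rw [hsplit]
        refine (norm_sub_le _ _).trans_eq ?_
        simp
    _ ≤ 3 * ‖x‖ ^ 3 + ‖x‖ ^ 3 / 2 := by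
        gcongr
        exact norm_exp_sub_one_sub_id_sub_sq_div_two_le hx
    _ ≤ 4 * ‖x‖ ^ 3 := by nlinarith [pow_nonneg (norm_nonneg x) 3]

theorem norm_two_sub_mul_exp_sub_two_add_le_of_re_nonpos {x : ℂ} (hx : x.re ≤ 0) :
    ‖(2 - x) * exp x - (2 + x)‖ ≤ 2 * ‖x‖ + 4 := by
  have hexp : ‖exp x‖ ≤ 1 := by rw [norm_exp]; exact Real.exp_le_one_iff.2 hx
  calc ‖(2 - x) * exp x - (2 + x)‖ ≤ ‖2 - x‖ * ‖exp x‖ + ‖2 + x‖ := by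
        rw [← norm_mul]; exact norm_sub_le _ _
    _ ≤ (2 + ‖x‖) * 1 + (2 + ‖x‖) := by
        gcongr
        · exact (norm_sub_le _ _).trans (by norm_num)
        · exact (norm_add_le _ _).trans (by norm_num)
    _ = 2 * ‖x‖ + 4 := by ring

end Complex

lemma vd_zero_left (t : ℝ) : vd 0 t = 0 := by
  unfold vd; split_ifs <;> simp

lemma vd_eq_pow_mul_vd_one (s t : ℝ) : vd s t = (s : ℂ) ^ 3 * vd 1 (s * t) := by
  rcases eq_or_ne s 0 with rfl | hs
  · simp [vd_zero_left]
  rcases eq_or_ne t 0 with rfl | ht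
  · simp [vd]
  have hsc : (s : ℂ) ≠ 0 := by exact_mod_cast hs
  have htc : (t : ℂ) ≠ 0 := by exact_mod_cast ht
  rw [vd, vd, if_neg ht, if_neg (mul_ne_zero hs ht)]
  push_cast
  field_simp

lemma vd_one_eq {t : ℝ} (ht : t ≠ 0) :
    vd 1 t =
      ((2 - -Complex.I * t) * Complex.exp (-Complex.I * t) - (2 + -Complex.I * t)) / t ^ 3 := by
  have htc : (t : ℂ) ≠ 0 := by exact_mod_cast ht
  rw [vd, if_neg ht]
  push_cast
  field_simp
  ring

lemma measurable_vd (s : ℝ) : Measurable (vd s) :=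
  Measurable.ite measurableSet_eq measurable_const (by fun_prop)

lemma norm_vd_one_le_of_abs_le_one {t : ℝ} (ht : |t| ≤ 1) : ‖vd 1 t‖ ≤ 4 := by
  rcases eq_or_ne t 0 with rfl | ht0
  · simp [vd]
  have hx : ‖-Complex.I * t‖ = |t| := by simp
  rw [vd_one_eq ht0, norm_div, norm_pow, Complex.norm_real, Real.norm_eq_abs,
    div_le_iff₀ (by positivity)]
  exact (Complex.norm_two_sub_mul_exp_sub_two_add_le_of_norm_le_one (hx ▸ ht)).trans_eq
    (by rw [hx])

lemma norm_vd_one_le_of_one_le_abs {t : ℝ} (ht : 1 ≤ |t|) : ‖vd 1 t‖ ≤ 6 / t ^ 2 := by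
  have ht0 : t ≠ 0 := by rintro rfl; norm_num at ht
  have hx : ‖-Complex.I * t‖ = |t| := by simp
  have hre : (-Complex.I * t).re ≤ 0 := by simp
  rw [vd_one_eq ht0, norm_div, norm_pow, Complex.norm_real, Real.norm_eq_abs,
    div_le_div_iff₀ (by positivity) (by positivity)]
  have hnum := Complex.norm_two_sub_mul_exp_sub_two_add_le_of_re_nonpos hre
  rw [hx] at hnum
  calc _ ≤ (2 * |t| + 4) * t ^ 2 := by gcongr
    _ ≤ 6 * |t| ^ 3 := by nlinarith [sq_abs t]

lemma norm_vd_one_le (t : ℝ) : ‖vd 1 t‖ ≤ 12 * (1 + t ^ 2)⁻¹ := by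
  rw [← div_eq_mul_inv, le_div_iff₀ (by positivity)]
  rcases le_total |t| 1 with ht | ht
  · have : t ^ 2 ≤ 1 := by nlinarith [sq_abs t, abs_nonneg t]
    nlinarith [norm_vd_one_le_of_abs_le_one ht, norm_nonneg (vd 1 t)]
  · have h6 := norm_vd_one_le_of_one_le_abs ht
    have ht2 : 1 ≤ t ^ 2 := by nlinarith [sq_abs t]
    rw [le_div_iff₀ (by positivity)] at h6
    nlinarith [norm_nonneg (vd 1 t)]

lemma integrable_vd_one : Integrable (vd 1) :=
  (integrable_inv_one_add_sq.const_mul 12).mono' (measurable_vd 1).aestronglyMeasurable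
    (ae_of_all _ norm_vd_one_le)

lemma integrable_vd (s : ℝ) : Integrable (vd s) := by
  rcases eq_or_ne s 0 with rfl | hs
  · simp [funext vd_zero_left]
  simp_rw [funext (vd_eq_pow_mul_vd_one s)]
  exact (integrable_vd_one.comp_mul_left' hs).const_mul _

lemma integral_norm_vd (s : ℝ) : ∫ t, ‖vd s t‖ = (∫ t, ‖vd 1 t‖) * s ^ 2 := by
  rcases eq_or_ne s 0 with rfl | hs
  · simp [vd_zero_left]
  simp_rw [vd_eq_pow_mul_vd_one s, norm_mul, norm_pow, Complex.norm_real, Real.norm_eq_abs]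
  rw [integral_const_mul, Measure.integral_comp_mul_left (fun u => ‖vd 1 u‖), smul_eq_mul,
    abs_inv]
  field_simp
  rw [sq_abs, mul_comm]

lemma norm_Om_le {F : ℝ → ℂ} {M : ℝ} (hF : ∀ x, ‖F x‖ ≤ M) (s : ℝ) :
    ‖Om F s‖ ≤ (∫ t, ‖vd 1 t‖) * M * s ^ 2 := by
  calc ‖Om F s‖ ≤ ∫ t, M * ‖vd s t‖ := by
        rw [Om, norm_neg]
        refine norm_integral_le_of_norm_le ((integrable_vd s).norm.const_mul M) (ae_of_all _ ?_)
        intro t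
        rw [norm_mul]
        exact mul_le_mul_of_nonneg_right (hF t) (norm_nonneg _)
    _ = (∫ t, ‖vd 1 t‖) * M * s ^ 2 := by rw [integral_const_mul, integral_norm_vd]; ring

lemma BcR.bddAbove_range_norm {F : ℝ → ℂ} (hF : BcR F) :
    BddAbove (Set.range fun x => ‖F x‖) := by
  obtain ⟨hcont, hbot, L, htop⟩ := hF
  have hbdd : Bornology.IsBounded (Set.range F) :=
    hcont.isBounded_range_iff_isBigO_atTop_atBot.2 ⟨htop.isBigO_one ℝ, hbot.isBigO_one ℝ⟩
  obtain ⟨C, hC⟩ := hbdd.exists_norm_le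
  exact ⟨C, Set.forall_mem_range.2 fun x => hC _ ⟨x, rfl⟩⟩

theorem hasDerivAt_zero_of_norm_le_mul_sq {E : Type*} [NormedAddCommGroup E] [NormedSpace ℝ E]
    {f : ℝ → E} {C : ℝ} (hf : ∀ s, ‖f s‖ ≤ C * s ^ 2) : HasDerivAt f 0 0 := by
  have hO : f =O[𝓝 0] fun s => ‖s - 0‖ ^ 2 :=
    Asymptotics.IsBigO.of_bound C (.of_forall fun s => by simpa using hf s)
  simpa using (hO.hasFDerivAt (𝕜 := ℝ) one_lt_two).hasDerivAt

theorem stmt1 (F : ℝ → ℂ) (hF : BcR F) :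
    (∀ s : ℝ, ‖Om F s‖ ≤ (∫ t : ℝ, ‖vd 1 t‖) * (⨆ x : ℝ, ‖F x‖) * s^2) ∧
    Om F 0 = 0 ∧ HasDerivAt (Om F) 0 0 := by
  have hbound := norm_Om_le (fun x => le_ciSup hF.bddAbove_range_norm x)
  refine ⟨hbound, ?_, hasDerivAt_zero_of_norm_le_mul_sq hbound⟩
  simpa using hbound 0
end

section
/- Let F ∈ ℬ_c(ℝ). Then for every Schwartz function φ : ℝ → ℂ, ∫_{−∞}^{∞} Ω_F(s)·φ″(s) ds = −∫_{−∞}^{∞} F(t)·(d/dt)[φ̂(t)] dt, where φ̂(t) = ∫_{−∞}^{∞} e^{−i·s·t} φ(s) ds. (That is, the definition of the Fourier transform of f = F′ as the second distributional derivative of Ω_F agrees with the Fourier transform of f as a tempered distribution: ⟨Ω_F″, φ⟩ = ⟨F′, φ̂⟩.) -/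
open MeasureTheory Filter Topology

/-!
For fixed `t ≠ 0` the kernel `vd s t` depends on `s` only through `s t`: it equals
`vdNum (s t) / t³`, and its second `s`-derivative is `-i s e^{-i s t}`, the `t`-derivative of
the Fourier kernel `e^{-i s t}`. Two integrations by parts against `φ` in `s` therefore turn
`∫ vd s t φ''(s) ds` into `φ̂'(t)`. The Taylor expansion of `e^{-ix}` gives
`|vd s t| ≤ 12 |s|³ / (1 + (s t)²)`, whose `t`-integral is `12 π s²`; as `F` is bounded this
justifies exchanging the `s`- and `t`-integrals in `∫ Ω_F φ''`.
-/

open Complex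
open scoped SchwartzMap

noncomputable def vdNum (x : ℝ) : ℂ :=
  I * x * cexp (-I * x) + 2 * cexp (-I * x) + I * x - 2

noncomputable def vdNum' (x : ℝ) : ℂ := x * cexp (-I * x) - I * cexp (-I * x) + I

lemma hasDerivAt_cexp_neg_I_mul_mul (s t : ℝ) :
    HasDerivAt (fun t : ℝ => cexp (-I * s * t)) (-I * s * cexp (-I * s * t)) t := by
  simpa [mul_comm] using (((hasDerivAt_id (t : ℂ)).const_mul (-I * s)).cexp).comp_ofReal

lemma hasDerivAt_cexp_neg_I_mul (x : ℝ) :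
    HasDerivAt (fun x : ℝ => cexp (-I * x)) (-I * cexp (-I * x)) x := by
  simpa using hasDerivAt_cexp_neg_I_mul_mul 1 x

lemma hasDerivAt_vdNum (x : ℝ) : HasDerivAt vdNum (vdNum' x) x := by
  have hx : HasDerivAt (fun x : ℝ => I * x) I x := by
    simpa using ((hasDerivAt_id x).ofReal_comp).const_mul I
  have hE := hasDerivAt_cexp_neg_I_mul x
  refine ((((hx.mul hE).add (hE.const_mul 2)).add hx).sub_const 2).congr_deriv ?_
  simp only [vdNum']
  linear_combination (-(x : ℂ) * cexp (-I * x)) * I_sq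

lemma hasDerivAt_vdNum' (x : ℝ) : HasDerivAt vdNum' (-I * x * cexp (-I * x)) x := by
  have hE := hasDerivAt_cexp_neg_I_mul x
  refine ((((hasDerivAt_id x).ofReal_comp.mul hE).sub (hE.const_mul I)).add_const I).congr_deriv ?_
  simp only [ofReal_one, id]
  linear_combination cexp (-I * x) * I_sq

lemma norm_cexp_neg_I_mul (x : ℝ) : ‖cexp (-I * x)‖ = 1 := by
  simpa [neg_mul, mul_comm] using norm_exp_ofReal_mul_I (-x)

lemma norm_cexp_neg_I_mul_mul (s t : ℝ) : ‖cexp (-I * s * t)‖ = 1 := by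
  simpa [mul_assoc] using norm_cexp_neg_I_mul (s * t)

lemma norm_vdNum_le (x : ℝ) : ‖vdNum x‖ ≤ 2 * |x| + 4 := by
  have h : vdNum x = (I * x + 2) * cexp (-I * x) - (2 - I * x) := by unfold vdNum; ring
  have h₁ : ‖I * x + 2‖ ≤ |x| + 2 := (norm_add_le _ _).trans (by simp)
  have h₂ : ‖2 - I * x‖ ≤ |x| + 2 := (norm_sub_le _ _).trans (by simp [add_comm])
  calc ‖vdNum x‖ ≤ ‖I * x + 2‖ * ‖cexp (-I * x)‖ + ‖2 - I * x‖ := by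
        rw [h, ← norm_mul]; exact norm_sub_le _ _
    _ ≤ 2 * |x| + 4 := by rw [norm_cexp_neg_I_mul]; linarith

lemma norm_vdNum_le_of_abs_le_one {x : ℝ} (hx : |x| ≤ 1) : ‖vdNum x‖ ≤ 7 / 6 * |x| ^ 3 := by
  have hnorm : ‖-I * x‖ = |x| := by simp
  have hT := exp_bound (x := -I * x) (hnorm ▸ hx) (n := 3) (by norm_num)
  simp only [Finset.sum_range_succ, Finset.sum_range_zero, hnorm] at hT
  norm_num [Nat.factorial] at hT
  have h : vdNum x = (I * x + 2) * (cexp (-I * x) - (1 + -I * x + (-I * x) ^ 2 / 2))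
      - I * x ^ 3 / 2 := by
    unfold vdNum; linear_combination (I * (x : ℂ) ^ 3 / 2) * I_sq
  have h₁ : ‖I * x + 2‖ ≤ 3 := (norm_add_le _ _).trans (by simp; linarith)
  have h₂ : ‖I * (x : ℂ) ^ 3 / 2‖ = |x| ^ 3 / 2 := by simp
  calc ‖vdNum x‖ ≤ ‖I * x + 2‖ * ‖cexp (-I * x) - (1 + -I * x + (-I * x) ^ 2 / 2)‖
        + ‖I * (x : ℂ) ^ 3 / 2‖ := by rw [h, ← norm_mul]; exact norm_sub_le _ _
    _ ≤ 3 * (|x| ^ 3 * (2 / 9)) + |x| ^ 3 / 2 := by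
        rw [h₂]; gcongr; simpa using hT
    _ = 7 / 6 * |x| ^ 3 := by ring

lemma norm_vdNum_mul_le (x : ℝ) : ‖vdNum x‖ * (1 + x ^ 2) ≤ 12 * |x| ^ 3 := by
  rw [← sq_abs x]
  rcases le_total |x| 1 with hx | hx
  · have := norm_vdNum_le_of_abs_le_one hx
    have : 1 + |x| ^ 2 ≤ 2 := by nlinarith [abs_nonneg x]
    nlinarith [norm_nonneg (vdNum x), abs_nonneg x]
  · have := norm_vdNum_le x
    nlinarith [norm_nonneg (vdNum x), abs_nonneg x]

lemma norm_vdNum'_le (x : ℝ) : ‖vdNum' x‖ ≤ |x| + 2 := by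
  unfold vdNum'
  calc _ ≤ ‖(x : ℂ) * cexp (-I * x)‖ + ‖I * cexp (-I * x)‖ + ‖I‖ :=
        (norm_add_le _ _).trans (by gcongr; exact norm_sub_le _ _)
    _ = |x| + 2 := by rw [norm_mul, norm_mul, norm_cexp_neg_I_mul]; simp; ring

lemma vd_eq_vdNum (s : ℝ) {t : ℝ} (ht : t ≠ 0) : vd s t = vdNum (s * t) / t ^ 3 := by
  have ht' : (t : ℂ) ≠ 0 := ofReal_ne_zero.2 ht
  simp only [vd, vdNum, if_neg ht]
  push_cast
  field_simp
  ring

lemma norm_vd_mul_le (s t : ℝ) : ‖vd s t‖ * (1 + (s * t) ^ 2) ≤ 12 * |s| ^ 3 := by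
  rcases eq_or_ne t 0 with rfl | ht
  · simp [vd]
  have ht3 : 0 < |t| ^ 3 := by positivity
  calc ‖vd s t‖ * (1 + (s * t) ^ 2) = ‖vdNum (s * t)‖ * (1 + (s * t) ^ 2) / |t| ^ 3 := by
        rw [vd_eq_vdNum s ht, norm_div, norm_pow, norm_real, Real.norm_eq_abs, div_mul_eq_mul_div]
    _ ≤ 12 * |s * t| ^ 3 / |t| ^ 3 := by gcongr ?_ / _; exact norm_vdNum_mul_le _
    _ = 12 * |s| ^ 3 := by rw [abs_mul, mul_pow]; field_simp

lemma norm_vd_le (s t : ℝ) : ‖vd s t‖ ≤ 12 * |s| ^ 3 :=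
  (le_mul_of_one_le_right (norm_nonneg _) (by nlinarith)).trans (norm_vd_mul_le s t)

lemma measurable_uncurry_vd : Measurable (Function.uncurry vd) := by
  refine Measurable.ite (measurableSet_eq_fun measurable_snd measurable_const) (by fun_prop) ?_
  fun_prop

section SchwartzIntegration

variable {D : Type*} [NormedAddCommGroup D] [NormedSpace ℝ D] [MeasurableSpace D] [BorelSpace D]
  [SecondCountableTopology D] {μ : Measure D} [μ.HasTemperateGrowth]

lemma SchwartzMap.integrable_mul_of_norm_le (ψ : 𝓢(D, ℂ)) {g : D → ℂ} {C : ℝ} {k : ℕ}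
    (hg : AEStronglyMeasurable g μ) (hg_le : ∀ x, ‖g x‖ ≤ C * (1 + ‖x‖) ^ k) :
    Integrable (fun x => g x * ψ x) μ := by
  refine (((ψ.integrable (μ := μ)).norm.add (ψ.integrable_pow_mul μ k)).const_mul
    (C * 2 ^ (k - 1))).mono' (hg.mul ψ.continuous.aestronglyMeasurable) (.of_forall fun x => ?_)
  have hC : 0 ≤ C := (norm_nonneg _).trans ((hg_le 0).trans_eq (by simp))
  calc ‖g x * ψ x‖ ≤ C * (1 + ‖x‖) ^ k * ‖ψ x‖ := by
        rw [norm_mul]; gcongr; exact hg_le x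
    _ ≤ C * (2 ^ (k - 1) * (1 ^ k + ‖x‖ ^ k)) * ‖ψ x‖ := by
        gcongr; exact add_pow_le zero_le_one (norm_nonneg x) k
    _ = C * 2 ^ (k - 1) * (‖ψ x‖ + ‖x‖ ^ k * ‖ψ x‖) := by ring

end SchwartzIntegration

lemma SchwartzMap.integral_mul_deriv_deriv (ψ : 𝓢(ℝ, ℂ)) {u u' u'' : ℝ → ℂ}
    {C₀ C₁ C₂ : ℝ} {k₀ k₁ k₂ : ℕ}
    (hu : ∀ x, HasDerivAt u (u' x) x) (hu' : ∀ x, HasDerivAt u' (u'' x) x)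
    (hu_le : ∀ x, ‖u x‖ ≤ C₀ * (1 + ‖x‖) ^ k₀) (hu'_le : ∀ x, ‖u' x‖ ≤ C₁ * (1 + ‖x‖) ^ k₁)
    (hu''_le : ∀ x, ‖u'' x‖ ≤ C₂ * (1 + ‖x‖) ^ k₂) :
    ∫ x, u x * deriv (deriv ψ) x = ∫ x, u'' x * ψ x := by
  have hu_meas : AEStronglyMeasurable u :=
    (continuous_iff_continuousAt.2 fun x => (hu x).continuousAt).aestronglyMeasurable
  have hu'_meas : AEStronglyMeasurable u' :=
    (continuous_iff_continuousAt.2 fun x => (hu' x).continuousAt).aestronglyMeasurable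
  have hu''_meas : AEStronglyMeasurable u'' := by
    rw [show u'' = deriv u' from funext fun x => (hu' x).deriv.symm]
    exact (measurable_deriv u').aestronglyMeasurable
  let ψ' := SchwartzMap.derivCLM ℝ ℂ ψ
  let ψ'' := SchwartzMap.derivCLM ℝ ℂ ψ'
  calc ∫ x, u x * deriv (deriv ψ) x = -∫ x, u' x * deriv ψ x :=
      integral_mul_deriv_eq_deriv_mul_of_integrable (fun x _ => hu x)
        (fun x _ => ψ'.hasDerivAt x) (ψ''.integrable_mul_of_norm_le hu_meas hu_le)
        (ψ'.integrable_mul_of_norm_le hu'_meas hu'_le) (ψ'.integrable_mul_of_norm_le hu_meas hu_le)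
    _ = -(-∫ x, u'' x * ψ x) := congrArg Neg.neg <|
      integral_mul_deriv_eq_deriv_mul_of_integrable (fun x _ => hu' x)
        (fun x _ => ψ.hasDerivAt x) (ψ'.integrable_mul_of_norm_le hu'_meas hu'_le)
        (ψ.integrable_mul_of_norm_le hu''_meas hu''_le) (ψ.integrable_mul_of_norm_le hu'_meas hu'_le)
    _ = ∫ x, u'' x * ψ x := neg_neg _

lemma integral_vd_mul_deriv_deriv (ψ : 𝓢(ℝ, ℂ)) {t : ℝ} (ht : t ≠ 0) :
    ∫ s, vd s t * deriv (deriv ψ) s = ∫ s : ℝ, -I * s * cexp (-I * s * t) * ψ s := by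
  have ht' : (t : ℂ) ≠ 0 := ofReal_ne_zero.2 ht
  have hst (s : ℝ) : HasDerivAt (fun s : ℝ => s * t) t s := by
    simpa using (hasDerivAt_id s).mul_const t
  simp_rw [vd_eq_vdNum _ ht]
  refine SchwartzMap.integral_mul_deriv_deriv ψ (u' := fun s => vdNum' (s * t) / t ^ 2)
    (C₀ := 12) (k₀ := 3) (C₁ := (|t| + 2) / t ^ 2) (k₁ := 1) (C₂ := 1) (k₂ := 1)
    (fun s => ?_) (fun s => ?_) (fun s => ?_) (fun s => ?_) (fun s => ?_)
  · refine (((hasDerivAt_vdNum _).scomp s (hst s)).div_const _).congr_deriv ?_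
    rw [real_smul]; field_simp
  · refine (((hasDerivAt_vdNum' _).scomp s (hst s)).div_const _).congr_deriv ?_
    rw [real_smul]; push_cast; field_simp
  · rw [← vd_eq_vdNum _ ht, Real.norm_eq_abs]
    refine (norm_vd_le s t).trans ?_
    gcongr; linarith
  · rw [norm_div, norm_pow, norm_real, Real.norm_eq_abs, sq_abs, Real.norm_eq_abs, pow_one,
      div_mul_eq_mul_div]
    gcongr
    refine (norm_vdNum'_le _).trans ?_
    rw [abs_mul]
    nlinarith [abs_nonneg s, abs_nonneg t]
  · rw [norm_mul, norm_cexp_neg_I_mul_mul]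
    simp

lemma hasDerivAt_integral_cexp_mul {g : ℝ → ℂ} (hg : Integrable g)
    (hg₁ : Integrable fun s => ‖s‖ * ‖g s‖) (t : ℝ) :
    HasDerivAt (fun t' : ℝ => ∫ s : ℝ, cexp (-I * s * t') * g s)
      (∫ s : ℝ, -I * s * cexp (-I * s * t) * g s) t := by
  have hmeas (t : ℝ) : AEStronglyMeasurable (fun s : ℝ => cexp (-I * s * t) * g s) :=
    (by fun_prop : Continuous fun s : ℝ => cexp (-I * s * t)).aestronglyMeasurable.mul
      hg.aestronglyMeasurable
  refine (hasDerivAt_integral_of_dominated_loc_of_deriv_le (bound := fun s => ‖s‖ * ‖g s‖)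
    (F' := fun t s => -I * s * cexp (-I * s * t) * g s) (s := Set.univ) Filter.univ_mem
    (.of_forall hmeas) ?_ ?_ ?_ hg₁ ?_).2
  · exact hg.norm.mono' (hmeas t)
      (.of_forall fun s => by rw [norm_mul, norm_cexp_neg_I_mul_mul, one_mul])
  · exact (by fun_prop : Continuous fun s : ℝ => -I * s * cexp (-I * s * t)).aestronglyMeasurable.mul
      hg.aestronglyMeasurable
  · exact .of_forall fun s t _ => by
      rw [norm_mul, norm_mul, norm_mul, norm_cexp_neg_I_mul_mul]; simp
  · exact .of_forall fun s t _ => (hasDerivAt_cexp_neg_I_mul_mul s t).mul_const _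

lemma integrable_abs_pow_three_mul_inv_one_add_mul_sq (s : ℝ) :
    Integrable fun t : ℝ => |s| ^ 3 * (1 + (s * t) ^ 2)⁻¹ := by
  rcases eq_or_ne s 0 with rfl | hs
  · simp
  · exact (integrable_inv_one_add_sq.comp_mul_left' hs).const_mul _

lemma integral_abs_pow_three_mul_inv_one_add_mul_sq (s : ℝ) :
    ∫ t : ℝ, |s| ^ 3 * (1 + (s * t) ^ 2)⁻¹ = Real.pi * s ^ 2 := by
  rcases eq_or_ne s 0 with rfl | hs
  · simp
  · rw [integral_const_mul, Measure.integral_comp_mul_left (fun t => (1 + t ^ 2)⁻¹),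
      integral_univ_inv_one_add_sq, smul_eq_mul, abs_inv, ← sq_abs s]
    field_simp

lemma norm_mul_vd_mul_le {F : ℝ → ℂ} {M : ℝ} (hFM : ∀ t, ‖F t‖ ≤ M) (g : ℝ → ℂ) (s t : ℝ) :
    ‖F t * vd s t * g s‖ ≤ 12 * M * ‖g s‖ * (|s| ^ 3 * (1 + (s * t) ^ 2)⁻¹) := by
  have hvd : ‖vd s t‖ ≤ 12 * |s| ^ 3 * (1 + (s * t) ^ 2)⁻¹ := by
    rw [← div_eq_mul_inv, le_div_iff₀ (by positivity)]; exact norm_vd_mul_le s t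
  rw [norm_mul, norm_mul]
  calc ‖F t‖ * ‖vd s t‖ * ‖g s‖ ≤ M * (12 * |s| ^ 3 * (1 + (s * t) ^ 2)⁻¹) * ‖g s‖ := by
        gcongr
        · exact (norm_nonneg _).trans (hFM t)
        · exact hFM t
    _ = _ := by ring

lemma integrable_uncurry_mul_vd_mul {F g : ℝ → ℂ} {M : ℝ} (hF : AEStronglyMeasurable F)
    (hFM : ∀ t, ‖F t‖ ≤ M) (hg : AEStronglyMeasurable g)
    (hg₂ : Integrable fun s => ‖s‖ ^ 2 * ‖g s‖) :
    Integrable (Function.uncurry fun s t => F t * vd s t * g s) (volume.prod volume) := by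
  have hmeas : AEStronglyMeasurable (Function.uncurry fun s t => F t * vd s t * g s)
      (volume.prod volume) :=
    (hF.comp_snd.mul measurable_uncurry_vd.aestronglyMeasurable).mul hg.comp_fst
  have hbound (s : ℝ) := (integrable_abs_pow_three_mul_inv_one_add_mul_sq s).const_mul
    (12 * M * ‖g s‖)
  refine (integrable_prod_iff hmeas).2 ⟨hmeas.prodMk_left.mono fun s hs => ?_, ?_⟩
  · exact (hbound s).mono' hs (.of_forall (norm_mul_vd_mul_le hFM g s))
  refine (hg₂.const_mul (12 * M * Real.pi)).mono' hmeas.norm.integral_prod_right'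
    (.of_forall fun s => ?_)
  rw [Real.norm_of_nonneg (integral_nonneg fun _ => norm_nonneg _)]
  calc ∫ t, ‖F t * vd s t * g s‖
      ≤ ∫ t, 12 * M * ‖g s‖ * (|s| ^ 3 * (1 + (s * t) ^ 2)⁻¹) :=
        integral_mono_of_nonneg (.of_forall fun _ => norm_nonneg _) (hbound s)
          (.of_forall (norm_mul_vd_mul_le hFM g s))
    _ = 12 * M * Real.pi * (‖s‖ ^ 2 * ‖g s‖) := by
        rw [integral_const_mul, integral_abs_pow_three_mul_inv_one_add_mul_sq, Real.norm_eq_abs,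
          sq_abs]
        ring

lemma integral_Om_mul {F g : ℝ → ℂ} {M : ℝ} (hF : AEStronglyMeasurable F)
    (hFM : ∀ t, ‖F t‖ ≤ M) (hg : AEStronglyMeasurable g)
    (hg₂ : Integrable fun s => ‖s‖ ^ 2 * ‖g s‖) :
    ∫ s, Om F s * g s = -∫ t, F t * ∫ s, vd s t * g s := by
  calc ∫ s, Om F s * g s = -∫ s, ∫ t, F t * vd s t * g s := by
        simp only [Om, neg_mul, ← integral_mul_const]; exact integral_neg _
    _ = -∫ t, ∫ s, F t * vd s t * g s := by
        rw [integral_integral_swap (integrable_uncurry_mul_vd_mul hF hFM hg hg₂)]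
    _ = -∫ t, F t * ∫ s, vd s t * g s := by simp only [mul_assoc, integral_const_mul]

lemma BcR.exists_norm_le {F : ℝ → ℂ} (hF : BcR F) : ∃ M, ∀ t, ‖F t‖ ≤ M := by
  obtain ⟨hc, h0, L, hL⟩ := hF
  obtain ⟨M, hM⟩ := isBounded_iff_forall_norm_le.1 <|
    hc.isBounded_range_iff_isBigO_atTop_atBot.2 ⟨hL.isBigO_one ℝ, h0.isBigO_one ℝ⟩
  exact ⟨M, fun t => hM _ ⟨t, rfl⟩⟩

theorem stmt9 (F : ℝ → ℂ) (hF : BcR F) (φ : SchwartzMap ℝ ℂ) :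
    ∫ s : ℝ, Om F s * deriv (deriv (φ : ℝ → ℂ)) s
      = -∫ t : ℝ, F t *
          deriv (fun t' : ℝ => ∫ s : ℝ, Complex.exp (-Complex.I*(s:ℂ)*(t':ℂ)) * φ s) t := by
  obtain ⟨M, hM⟩ := hF.exists_norm_le
  let φ'' := SchwartzMap.derivCLM ℝ ℂ (SchwartzMap.derivCLM ℝ ℂ φ)
  refine (integral_Om_mul (g := deriv (deriv φ)) hF.1.aestronglyMeasurable hM
    φ''.continuous.aestronglyMeasurable (φ''.integrable_pow_mul volume 2)).trans ?_
  congr 1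
  refine integral_congr_ae ((Measure.ae_ne volume 0).mono fun t ht => ?_)
  dsimp only
  rw [integral_vd_mul_deriv_deriv φ ht,
    (hasDerivAt_integral_cexp_mul φ.integrable (by simpa using φ.integrable_pow_mul volume 1) t).deriv]
end

section
/- Let F ∈ ℬ_c(ℝ). Let ψ ∈ L¹(ℝ;ℂ) with ∫_{−∞}^{∞} ψ(t) dt = 1, and suppose the Fourier transform ψ̂(s) = ∫ e^{−i·s·t} ψ(t) dt is differentiable on ℝ with ψ̂(s) = ψ̂(0) + ∫_0^s ψ̂′(u) du for all s, and that s ↦ s²·ψ̂(s) and s ↦ s²·ψ̂′(s) are in L¹(ℝ) and s ↦ s²·ψ̂′(s) is of bounded variation on ℝ. For a > 0 let ψ_a(x) = ψ(x/a)/a. Then sup_{x∈ℝ} |F(x) − ∫_{−∞}^{∞} F(x − t)·ψ_a(t) dt| → 0 as a → 0⁺. (Since F*ψ_a is the primitive of f*ψ_a = I_a[f] where f = F′, this says ‖f − I_a[f]‖ → 0 in the Alexiewicz norm.) -/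
/-!
`F` is bounded and uniformly continuous, being a `C₀` function plus a clamped ramp times its
limit at `+∞`. Substituting `t = a s`,
`F x - (F ∗ ψ_a) x = ∫ (F x - F (x - a s)) ψ s ds`, which is bounded uniformly in `x` by
`∫ ω (a s) ‖ψ s‖ ds` with `ω h = ⨆ x, ‖F x - F (x - h)‖`. Since `ω ≤ 2 ‖F‖_∞` and `ω h → 0` as
`h → 0` by uniform continuity, this bound tends to `0` by dominated convergence; `ω` is lower
semicontinuous, hence measurable.
-/

open MeasureTheory Filter Topology

open scoped ZeroAtInfty

theorem exists_zeroAtInfty_add_projIcc_smul {E : Type*} [NormedAddCommGroup E] [NormedSpace ℝ E]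
    {f : ℝ → E} {L : E} (hf : Continuous f) (hbot : Tendsto f atBot (𝓝 0))
    (htop : Tendsto f atTop (𝓝 L)) :
    ∃ g : C₀(ℝ, E), ∀ x, f x = g x + (Set.projIcc (0 : ℝ) 1 zero_le_one x : ℝ) • L := by
  set σ : ℝ → E := fun x => (Set.projIcc (0 : ℝ) 1 zero_le_one x : ℝ) • L
  have hσ : Continuous σ := (continuous_subtype_val.comp continuous_projIcc).smul continuous_const
  have hσbot : σ =ᶠ[atBot] fun _ => 0 := by
    filter_upwards [eventually_le_atBot 0] with x hx
    simp [σ, Set.projIcc_of_le_left _ hx]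
  have hσtop : σ =ᶠ[atTop] fun _ => L := by
    filter_upwards [eventually_ge_atTop 1] with x hx
    simp [σ, Set.projIcc_of_right_le _ hx]
  refine ⟨⟨⟨fun x => f x - σ x, hf.sub hσ⟩, ?_⟩, fun x => (sub_add_cancel _ _).symm⟩
  rw [cocompact_eq_atBot_atTop, tendsto_sup]
  constructor
  · simpa using hbot.sub (tendsto_const_nhds.congr' hσbot.symm)
  · simpa using htop.sub (tendsto_const_nhds.congr' hσtop.symm)

namespace BcR

variable {F : ℝ → ℂ}

theorem uniformContinuous (hF : BcR F) : UniformContinuous F := by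
  obtain ⟨hc, hbot, L, htop⟩ := hF
  obtain ⟨g, hg⟩ := exists_zeroAtInfty_add_projIcc_smul hc hbot htop
  have hσ : UniformContinuous fun x => (Set.projIcc (0 : ℝ) 1 zero_le_one x : ℝ) • L :=
    ((ContinuousLinearMap.id ℝ ℝ).smulRight L).uniformContinuous.comp
      (uniformContinuous_subtype_val.comp (LipschitzWith.projIcc zero_le_one).uniformContinuous)
  rw [show F = _ from funext hg]
  exact (ZeroAtInftyContinuousMap.uniformContinuous g).add hσ

theorem exists_bound (hF : BcR F) : ∃ C, ∀ x, ‖F x‖ ≤ C := by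
  obtain ⟨hc, hbot, L, htop⟩ := hF
  obtain ⟨g, hg⟩ := exists_zeroAtInfty_add_projIcc_smul hc hbot htop
  refine ⟨‖g.toBCF‖ + ‖L‖, fun x => ?_⟩
  rw [hg]
  have hσ : ‖(Set.projIcc (0 : ℝ) 1 zero_le_one x : ℝ)‖ ≤ 1 := by
    rw [Real.norm_of_nonneg (Set.projIcc _ _ _ x).2.1]
    exact (Set.projIcc _ _ _ x).2.2
  exact norm_add_le_of_le (g.toBCF.norm_coe_le_norm x)
    (by rw [norm_smul]; exact mul_le_of_le_one_left (norm_nonneg _) hσ)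

end BcR

noncomputable def translationModulus {E : Type*} [SeminormedAddCommGroup E] (F : ℝ → E) (h : ℝ) :
    ℝ :=
  ⨆ x, ‖F x - F (x - h)‖

section TranslationModulus

variable {E : Type*} [SeminormedAddCommGroup E] {F : ℝ → E} {C : ℝ}

theorem translationModulus_nonneg (F : ℝ → E) (h : ℝ) : 0 ≤ translationModulus F h :=
  Real.iSup_nonneg fun _ => norm_nonneg _

theorem norm_sub_comp_sub_le (hC : ∀ x, ‖F x‖ ≤ C) (x h : ℝ) : ‖F x - F (x - h)‖ ≤ 2 * C :=
  (norm_sub_le _ _).trans (by linarith [hC x, hC (x - h)])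

theorem norm_sub_comp_sub_le_translationModulus (hC : ∀ x, ‖F x‖ ≤ C) (x h : ℝ) :
    ‖F x - F (x - h)‖ ≤ translationModulus F h :=
  le_ciSup ⟨2 * C, Set.forall_mem_range.2 fun y => norm_sub_comp_sub_le hC y h⟩ x

theorem translationModulus_le (hC : ∀ x, ‖F x‖ ≤ C) (h : ℝ) : translationModulus F h ≤ 2 * C :=
  Real.iSup_le (fun x => norm_sub_comp_sub_le hC x h) (by linarith [norm_nonneg (F 0), hC 0])

theorem lowerSemicontinuous_translationModulus (hF : Continuous F) (hC : ∀ x, ‖F x‖ ≤ C) :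
    LowerSemicontinuous (translationModulus F) :=
  lowerSemicontinuous_ciSup
    (fun h => ⟨2 * C, Set.forall_mem_range.2 fun y => norm_sub_comp_sub_le hC y h⟩)
    fun x => (continuous_const.sub (hF.comp (continuous_sub_left x))).norm.lowerSemicontinuous

theorem UniformContinuous.tendsto_translationModulus (hF : UniformContinuous F) :
    Tendsto (translationModulus F) (𝓝 0) (𝓝 0) := by
  rw [Metric.tendsto_nhds_nhds]
  intro ε hε
  obtain ⟨δ, hδ, hFδ⟩ := Metric.uniformContinuous_iff.1 hF (ε / 2) (half_pos hε)
  refine ⟨δ, hδ, fun h hh => ?_⟩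
  have hmod : translationModulus F h ≤ ε / 2 :=
    Real.iSup_le (fun x => by
      rw [← dist_eq_norm]
      exact (hFδ (by simpa [Real.dist_eq] using hh)).le) (half_pos hε).le
  rw [Real.dist_0_eq_abs, abs_of_nonneg (translationModulus_nonneg F h)]
  linarith

theorem tendsto_integral_translationModulus_mul {G : Type*} [NormedAddCommGroup G]
    (hF : UniformContinuous F) (hC : ∀ x, ‖F x‖ ≤ C) {ψ : ℝ → G} (hψ : Integrable ψ) :
    Tendsto (fun a => ∫ s, translationModulus F (a * s) * ‖ψ s‖) (𝓝 0) (𝓝 0) := by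
  have hmeas := (lowerSemicontinuous_translationModulus hF.continuous hC).measurable
  have hlim := tendsto_integral_filter_of_dominated_convergence
    (F := fun a s => translationModulus F (a * s) * ‖ψ s‖) (fun s => 2 * C * ‖ψ s‖)
    (Eventually.of_forall fun a =>
      ((hmeas.comp (measurable_const_mul a)).aestronglyMeasurable.mul hψ.norm.1))
    (Eventually.of_forall fun a => ae_of_all _ fun s => by
      rw [Real.norm_eq_abs, abs_of_nonneg
        (mul_nonneg (translationModulus_nonneg F _) (norm_nonneg _))]
      exact mul_le_mul_of_nonneg_right (translationModulus_le hC _) (norm_nonneg _))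
    (hψ.norm.const_mul _)
    (ae_of_all _ fun s => by
      simpa using (hF.tendsto_translationModulus.comp
        ((continuous_mul_const s).tendsto' 0 0 (zero_mul s))).mul_const ‖ψ s‖)
  simpa using hlim

end TranslationModulus

theorem integral_mul_comp_div (F ψ : ℝ → ℂ) {a : ℝ} (ha : 0 < a) (x : ℝ) :
    ∫ t, F (x - t) * (ψ (t / a) / a) = ∫ s, F (x - a * s) * ψ s := by
  have hscale := Measure.integral_comp_div (fun s => F (x - a * s) * ψ s) a
  simp only [mul_div_cancel₀ _ ha.ne', abs_of_pos ha] at hscale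
  simp_rw [← mul_div_assoc]
  rw [integral_div, hscale, Complex.real_smul, mul_div_cancel_left₀ _ (by exact_mod_cast ha.ne')]

theorem norm_sub_integral_mul_comp_le {F ψ : ℝ → ℂ} {C : ℝ} (hF : Continuous F)
    (hC : ∀ x, ‖F x‖ ≤ C) (hψ : Integrable ψ) (hψ1 : ∫ s, ψ s = 1) (a x : ℝ) :
    ‖F x - ∫ s, F (x - a * s) * ψ s‖ ≤ ∫ s, translationModulus F (a * s) * ‖ψ s‖ := by
  have hFψ : Integrable fun s => F (x - a * s) * ψ s :=
    hψ.bdd_mul (by fun_prop) (ae_of_all _ fun s => hC _)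
  have hmod : Integrable fun s => translationModulus F (a * s) * ‖ψ s‖ :=
    hψ.norm.bdd_mul
      ((lowerSemicontinuous_translationModulus hF hC).measurable.comp
        (measurable_const_mul a)).aestronglyMeasurable
      (ae_of_all _ fun s => by
        rw [Real.norm_of_nonneg (translationModulus_nonneg F _)]
        exact translationModulus_le hC _)
  have hdiff : F x - ∫ s, F (x - a * s) * ψ s = ∫ s, (F x - F (x - a * s)) * ψ s := by
    simp_rw [sub_mul]
    rw [integral_sub (hψ.const_mul _) hFψ, integral_const_mul, hψ1, mul_one]
  rw [hdiff]
  refine (norm_integral_le_integral_norm _).trans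
    (integral_mono_of_nonneg (ae_of_all _ fun s => norm_nonneg _) hmod (ae_of_all _ fun s => ?_))
  simp only [norm_mul]
  exact mul_le_mul_of_nonneg_right (norm_sub_comp_sub_le_translationModulus hC x _) (norm_nonneg _)

theorem stmt14_general (F : ℝ → ℂ) (hF : BcR F)
    (ψ : ℝ → ℂ) (hψi : Integrable ψ) (hψ1 : (∫ t : ℝ, ψ t) = 1) :
    Tendsto (fun a : ℝ => ⨆ x : ℝ, ‖F x - ∫ t : ℝ, F (x - t) * (ψ (t/a)/(a:ℂ))‖)
      (𝓝[>] (0:ℝ)) (𝓝 0) := by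
  obtain ⟨C, hC⟩ := hF.exists_bound
  refine squeeze_zero' (Eventually.of_forall fun a => Real.iSup_nonneg fun x => norm_nonneg _) ?_
    ((tendsto_integral_translationModulus_mul hF.uniformContinuous hC hψi).mono_left
      nhdsWithin_le_nhds)
  filter_upwards [self_mem_nhdsWithin] with a (ha : 0 < a)
  refine Real.iSup_le (fun x => ?_)
    (integral_nonneg fun s => mul_nonneg (translationModulus_nonneg F _) (norm_nonneg _))
  rw [integral_mul_comp_div F ψ ha]
  exact norm_sub_integral_mul_comp_le hF.1 hC hψi hψ1 a x

theorem stmt14 (F : ℝ → ℂ) (hF : BcR F)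
    (ψ : ℝ → ℂ) (hψi : Integrable ψ) (hψ1 : (∫ t : ℝ, ψ t) = 1)
    (ψhat : ℝ → ℂ)
    (hψhat : ∀ s : ℝ, ψhat s = ∫ t : ℝ, Complex.exp (-Complex.I*(s:ℂ)*(t:ℂ)) * ψ t)
    (hdiff : Differentiable ℝ ψhat)
    (hftc : ∀ s : ℝ, ψhat s = ψhat 0 + ∫ σ in (0:ℝ)..s, deriv ψhat σ)
    (hL1 : Integrable (fun s : ℝ => (s:ℂ)^2 * ψhat s))
    (hL2 : Integrable (fun s : ℝ => (s:ℂ)^2 * deriv ψhat s))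
    (hbv : BoundedVariationOn (fun s : ℝ => (s:ℂ)^2 * deriv ψhat s) Set.univ) :
    Tendsto (fun a : ℝ => ⨆ x : ℝ, ‖F x - ∫ t : ℝ, F (x - t) * (ψ (t/a)/(a:ℂ))‖)
      (𝓝[>] (0:ℝ)) (𝓝 0) :=
  stmt14_general F hF ψ hψi hψ1
end

section
/- For every x ∈ ℝ and every Schwartz function φ : ℝ → ℂ, ∫_{−∞}^{∞} v_{−x}(t)·φ̂(t) dt = π·∫_{−∞}^{∞} (−|y| + x·sgn(y) + |y − x|)·φ(y) dy, where φ̂(t) = ∫_{−∞}^{∞} e^{−i·y·t} φ(y) dy. (That is, the Fourier transform of v_{−x} in the sense of tempered distributions is the function y ↦ π·(−|y| + x·sgn(y) + |y − x|).) -/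
/-!
Writing $e^{-ist}$ by Taylor's formula with integral remainder gives
$v_s(t) = \int_0^s (s-u) e^{-iut}\,du$. Since the $u$-range is compact and $\hat\varphi$ is
integrable, the integrals may be swapped, and Fourier inversion
$\int e^{-iut}\hat\varphi(t)\,dt = 2\pi\varphi(-u)$ turns the pairing into
$2\pi\int_x^0 (y-x)\varphi(y)\,dy$. Away from $y = 0$ the kernel $-|y| + x\,\mathrm{sgn}\,y + |y-x|$
equals $2(y-x)$ on $(x,0]$, $-2(y-x)$ on $(0,x]$ and vanishes elsewhere, which is exactly how the
oriented integral $\int_x^0$ is defined.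
-/

open MeasureTheory Filter Topology Real

open Complex FourierTransform

lemma integral_exp_mul_eq_fourier (f : ℝ → ℂ) (t : ℝ) :
    ∫ y : ℝ, exp (-I * y * t) * f y = 𝓕 f (t / (2 * π)) := by
  rw [Real.fourier_real_eq_integral_exp_smul]
  congr 1 with y
  rw [smul_eq_mul]
  congr 2
  push_cast
  field_simp

lemma integral_exp_mul_comp_div_two_pi (g : ℝ → ℂ) (u : ℝ) :
    ∫ t : ℝ, exp (-I * u * t) * g (t / (2 * π)) = 2 * π * 𝓕 g u := by
  have h := Measure.integral_comp_div (fun ξ : ℝ => exp (-I * ξ * ↑(2 * π * u)) * g ξ) (2 * π)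
  rw [integral_exp_mul_eq_fourier, abs_of_pos two_pi_pos] at h
  convert h using 2 with t
  · push_cast; field_simp
  · rw [real_smul]; push_cast; field_simp

lemma SchwartzMap.fourier_fourier_apply {V : Type*} [NormedAddCommGroup V] [InnerProductSpace ℝ V]
    [FiniteDimensional ℝ V] [MeasurableSpace V] [BorelSpace V] (φ : SchwartzMap V ℂ) (u : V) :
    𝓕 (𝓕 (φ : V → ℂ)) u = φ (-u) := by
  conv_lhs => rw [← neg_neg u]
  rw [← fourierInv_eq_fourier_neg, φ.continuous.fourierInv_fourier_eq φ.integrable (𝓕 φ).integrable]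

lemma v_eq_integral (s t : ℝ) :
    v s t = ∫ u in (0:ℝ)..s, ((s:ℂ) - u) * exp (-I * u * t) := by
  rcases eq_or_ne t 0 with rfl | ht
  · simp only [v, ↓reduceIte, ofReal_zero, mul_zero, Complex.exp_zero, mul_one]
    rw [intervalIntegral.integral_sub intervalIntegrable_const
      (continuous_ofReal.intervalIntegrable _ _), intervalIntegral.integral_const,
      intervalIntegral.integral_ofReal, integral_id, real_smul]
    push_cast
    ring
  have htc : (t : ℂ) ≠ 0 := ofReal_ne_zero.mpr ht
  have hexp (u : ℝ) : HasDerivAt (fun u : ℝ => exp (-I * u * t)) (-I * t * exp (-I * u * t)) u := by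
    simpa [mul_comm] using
      ((hasDerivAt_id (u : ℂ)).const_mul (-I)).mul_const (t : ℂ) |>.cexp |>.comp_ofReal
  have hG (u : ℝ) : HasDerivAt
      (fun u : ℝ => I / t * ((s - u) * exp (-I * u * t)) - exp (-I * u * t) / t ^ 2)
      ((s - u) * exp (-I * u * t)) u := by
    have hlin : HasDerivAt (fun u : ℝ => (s : ℂ) - u) (-1) u := by
      simpa using (hasDerivAt_id (u : ℂ)).comp_ofReal.const_sub (s : ℂ)
    refine (((hlin.mul (hexp u)).const_mul (I / t)).sub
      ((hexp u).div_const ((t : ℂ) ^ 2))).congr_deriv ?_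
    field_simp
    linear_combination ((u:ℂ) - s) * t * I_sq
  rw [intervalIntegral.integral_eq_sub_of_hasDerivAt (fun u _ => hG u)
    (by apply Continuous.intervalIntegrable; fun_prop)]
  simp only [v, if_neg ht, ofReal_zero, mul_zero, zero_mul, Complex.exp_zero, sub_zero]
  field_simp
  ring

lemma integral_intervalIntegral_mul_exp_swap {g : ℝ → ℂ} (hg : Integrable g) {f : ℝ → ℂ}
    (hf : Continuous f) (a b : ℝ) :
    ∫ t : ℝ, (∫ u in a..b, f u * exp (-I * u * t)) * g t
      = ∫ u in a..b, f u * ∫ t : ℝ, exp (-I * u * t) * g t := by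
  have hint : Integrable (Function.uncurry fun (u t : ℝ) => f u * exp (-I * u * t) * g t)
      ((volume.restrict (Set.uIoc a b)).prod volume) := by
    refine (hf.norm.integrableOn_uIoc.mul_prod hg.norm).mono' ?_ (.of_forall fun p => ?_)
    · exact (Continuous.aestronglyMeasurable (by fun_prop)).mul hg.aestronglyMeasurable.comp_snd
    · simp [Function.uncurry, norm_exp]
  simp_rw [← intervalIntegral.integral_mul_const, ← intervalIntegral_integral_swap hint,
    mul_assoc, integral_const_mul]

lemma integral_sign_abs_mul_eq_two_mul_intervalIntegral (x : ℝ) {f : ℝ → ℂ} (hf : Continuous f) :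
    ∫ y : ℝ, (((-|y| + x * Real.sign y + |y - x|) : ℝ) : ℂ) * f y
      = 2 * ∫ y in x..0, ((y : ℂ) - x) * f y := by
  have hkernel : ∀ y : ℝ, y ≠ 0 → -|y| + x * Real.sign y + |y - x|
      = 2 * (y - x) * ((Set.Ioc x 0).indicator 1 y - (Set.Ioc 0 x).indicator 1 y) := by
    intro y hy
    rcases hy.lt_or_gt with h | h <;>
      simp only [Real.sign_of_neg, Real.sign_of_pos, abs_of_neg, abs_of_pos, h, Set.indicator_apply,
        Set.mem_Ioc, Pi.one_apply] <;>
      split_ifs <;> grind [abs_of_nonneg, abs_of_neg]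
  set g : ℝ → ℂ := fun y => ((y : ℂ) - x) * f y
  have hg : Continuous g := by fun_prop
  calc ∫ y : ℝ, (((-|y| + x * Real.sign y + |y - x|) : ℝ) : ℂ) * f y
      = ∫ y : ℝ, 2 * ((Set.Ioc x 0).indicator g y - (Set.Ioc 0 x).indicator g y) := by
        refine integral_congr_ae ((volume.ae_ne 0).mono fun y hy => ?_)
        simp only [hkernel y hy, Set.indicator_apply, Pi.one_apply, g]
        split_ifs <;> push_cast <;> ring
    _ = 2 * ∫ y in x..0, g y := by
        rw [integral_const_mul, integral_sub, integral_indicator measurableSet_Ioc,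
          integral_indicator measurableSet_Ioc]
        · rfl
        · exact hg.integrableOn_Ioc.integrable_indicator measurableSet_Ioc
        · exact hg.integrableOn_Ioc.integrable_indicator measurableSet_Ioc

theorem stmt16 (x : ℝ) (φ : SchwartzMap ℝ ℂ) :
    ∫ t : ℝ, v (-x) t * (∫ y : ℝ, Complex.exp (-Complex.I*(y:ℂ)*(t:ℂ)) * φ y)
      = (π:ℂ) * ∫ y : ℝ, (((-|y| + x * Real.sign y + |y - x|) : ℝ) : ℂ) * φ y := by
  have hφ : Integrable fun t : ℝ => 𝓕 (φ : ℝ → ℂ) (t / (2 * π)) :=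
    (𝓕 φ).integrable.comp_div two_pi_pos.ne'
  calc ∫ t : ℝ, v (-x) t * (∫ y : ℝ, exp (-I * y * t) * φ y)
      = ∫ t : ℝ, (∫ u in (0:ℝ)..(-x), (((-x : ℝ) : ℂ) - u) * exp (-I * u * t))
          * 𝓕 (φ : ℝ → ℂ) (t / (2 * π)) := by
        simp_rw [v_eq_integral, integral_exp_mul_eq_fourier]
    _ = ∫ u in (0:ℝ)..(-x), (fun y : ℝ => 2 * π * (((y : ℂ) - x) * φ y)) (-u) := by
        rw [integral_intervalIntegral_mul_exp_swap hφ (by fun_prop)]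
        simp_rw [integral_exp_mul_comp_div_two_pi, SchwartzMap.fourier_fourier_apply]
        congr 1 with u
        push_cast
        ring
    _ = 2 * π * ∫ y in x..0, ((y : ℂ) - x) * φ y := by
        rw [intervalIntegral.integral_comp_neg (fun y : ℝ => 2 * π * (((y : ℂ) - x) * φ y)),
          intervalIntegral.integral_const_mul, neg_neg, neg_zero]
    _ = π * ∫ y : ℝ, (((-|y| + x * Real.sign y + |y - x|) : ℝ) : ℂ) * φ y := by
        rw [integral_sign_abs_mul_eq_two_mul_intervalIntegral x φ.continuous]
        ring
end

section
/- Let φ₁, φ₂ ∈ L¹(ℝ;ℂ) and define g_k(x) = ∫_{−∞}^x φ_k(t) dt for k = 1, 2 (so g_k is absolutely continuous with g_k′ = φ_k a.e.). Assume x ↦ x·g_k(x) ∈ L¹(ℝ) and t ↦ t²·φ_k(t) ∈ L¹(ℝ) for k = 1, 2 (then also g_k ∈ L¹(ℝ) and t ↦ t·φ_k(t) ∈ L¹(ℝ)). Let g = g₁ * g₂ be the convolution; then g(x) = ∫_{−∞}^x (g₁*φ₂)(v) dv. Then: (i) x ↦ x·g(x) is of bounded variation on ℝ with variation at most ‖p₁g₁‖₁·‖φ₂‖₁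 + ‖g₁‖₁·‖p₁φ₂‖₁ + ‖g₁‖₁·‖g₂‖₁; and (ii) x ↦ x²·(g₁*φ₂)(x) is of bounded variation on ℝ with variation at most 2‖p₁g₁‖₁·‖φ₂‖₁ + 2‖g₁‖₁·‖p₁φ₂‖₁ + ‖p₂φ₁‖₁·‖φ₂‖₁ + 2‖p₁φ₁‖₁·‖p₁φ₂‖₁ + ‖φ₁‖₁·‖p₂φ₂‖₁. Here ‖p_n·w‖₁ denotes ∫_{−∞}^{∞} |xⁿ·w(x)| dx. -/
/-!
Everything rests on two Fubini identities for a primitive `G x = ∫_{-∞}^x γ` of an integrable `γ`: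
`(G * w)(x) = ∫_{-∞}^x (γ * w)`, and `x G(x) = ∫_{-∞}^x (G v + v γ(v)) dv`, which is Cauchy's
formula `∫_{-∞}^x G = ∫_{-∞}^x (x - t) γ(t) dt` in disguise. A primitive of `h` has variation at
most `‖h‖₁`, and weights pass through a convolution by `x = (x - t) + t`, so that
`‖x (f * w)‖₁ ≤ ‖x f‖₁ ‖w‖₁ + ‖f‖₁ ‖x w‖₁`. For (ii), `g₁ * φ₂` is the primitive of `φ₁ * φ₂`,
and `x² (g₁ * φ₂)` is `x` times the primitive `x (g₁ * φ₂)`.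
-/

open MeasureTheory Filter Set
open scoped Convolution

/-- The convolution with the shift on the first factor, as in the statement; Mathlib's
`f ⋆[ContinuousLinearMap.mul ℝ ℂ] g` shifts the second one. -/
noncomputable def convolve (f g : ℝ → ℂ) (x : ℝ) : ℂ := ∫ t, f (x - t) * g t

theorem integral_norm_add_le {α E : Type*} [MeasurableSpace α] [NormedAddCommGroup E]
    {μ : Measure α} {f g : α → E} (hf : Integrable f μ) (hg : Integrable g μ) :
    ∫ x, ‖f x + g x‖ ∂μ ≤ (∫ x, ‖f x‖ ∂μ) + ∫ x, ‖g x‖ ∂μ :=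
  (integral_mono (hf.add hg).norm (hf.norm.add hg.norm) fun _ => norm_add_le _ _).trans_eq
    (integral_add hf.norm hg.norm)

section Convolve

variable {f g : ℝ → ℂ}

theorem convolve_comm (f g : ℝ → ℂ) (x : ℝ) : convolve f g x = convolve g f x := by
  rw [convolve, convolve, ← integral_sub_left_eq_self (fun t => g (x - t) * f t) volume x]
  simp only [sub_sub_cancel, mul_comm]

theorem integrable_convolve_integrand (hf : Integrable f) (hg : Integrable g) :
    Integrable (fun p : ℝ × ℝ => f (p.1 - p.2) * g p.2) (volume.prod volume) := by
  simpa only [ContinuousLinearMap.mul_apply', mul_comm]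
    using hg.convolution_integrand (ContinuousLinearMap.mul ℝ ℂ) hf

theorem MeasureTheory.Integrable.convolve (hf : Integrable f) (hg : Integrable g) :
    Integrable (convolve f g) :=
  (integrable_convolve_integrand hf hg).integral_prod_left

theorem integral_norm_convolve_le (hf : Integrable f) (hg : Integrable g) :
    ∫ x, ‖convolve f g x‖ ≤ (∫ x, ‖f x‖) * ∫ x, ‖g x‖ := by
  have hfg := hg.norm.integrable_convolution (ContinuousLinearMap.mul ℝ ℝ) hf.norm
  calc ∫ x, ‖convolve f g x‖
      ≤ ∫ x, ((fun t => ‖g t‖) ⋆[ContinuousLinearMap.mul ℝ ℝ] fun t => ‖f t‖) x := by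
        refine integral_mono (hf.convolve hg).norm hfg fun x => ?_
        simpa only [convolve, convolution_def, ContinuousLinearMap.mul_apply', norm_mul, mul_comm]
          using norm_integral_le_integral_norm fun t => f (x - t) * g t
    _ = (∫ x, ‖f x‖) * ∫ x, ‖g x‖ := by
        rw [integral_convolution _ hg.norm hf.norm, ContinuousLinearMap.mul_apply', mul_comm]

theorem ofReal_mul_convolve_ae_eq (hf : Integrable f) (hg : Integrable g)
    (hxf : Integrable fun x : ℝ => (x : ℂ) * f x) (hxg : Integrable fun x : ℝ => (x : ℂ) * g x) :
    (fun x : ℝ => (x : ℂ) * convolve f g x) =ᵐ[volume]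
      fun x => convolve (fun y : ℝ => (y : ℂ) * f y) g x +
        convolve f (fun y : ℝ => (y : ℂ) * g y) x := by
  filter_upwards [(integrable_convolve_integrand hxf hg).prod_right_ae,
    (integrable_convolve_integrand hf hxg).prod_right_ae] with x h₁ h₂
  rw [convolve, ← integral_const_mul, convolve, convolve, ← integral_add h₁ h₂]
  congr 1 with t
  push_cast
  ring

theorem integrable_ofReal_mul_convolve (hf : Integrable f) (hg : Integrable g)
    (hxf : Integrable fun x : ℝ => (x : ℂ) * f x) (hxg : Integrable fun x : ℝ => (x : ℂ) * g x) :
    Integrable fun x : ℝ => (x : ℂ) * convolve f g x :=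
  ((hxf.convolve hg).add (hf.convolve hxg)).congr (ofReal_mul_convolve_ae_eq hf hg hxf hxg).symm

theorem integral_norm_ofReal_mul_convolve_le (hf : Integrable f) (hg : Integrable g)
    (hxf : Integrable fun x : ℝ => (x : ℂ) * f x) (hxg : Integrable fun x : ℝ => (x : ℂ) * g x) :
    ∫ x : ℝ, ‖(x : ℂ) * convolve f g x‖ ≤
      (∫ x : ℝ, ‖(x : ℂ) * f x‖) * (∫ x, ‖g x‖) + (∫ x, ‖f x‖) * ∫ x : ℝ, ‖(x : ℂ) * g x‖ := by
  calc ∫ x : ℝ, ‖(x : ℂ) * convolve f g x‖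
      = ∫ x, ‖convolve (fun y : ℝ => (y : ℂ) * f y) g x +
          convolve f (fun y : ℝ => (y : ℂ) * g y) x‖ :=
        integral_congr_ae ((ofReal_mul_convolve_ae_eq hf hg hxf hxg).fun_comp norm)
    _ ≤ _ := (integral_norm_add_le (hxf.convolve hg) (hf.convolve hxg)).trans
        (add_le_add (integral_norm_convolve_le hxf hg) (integral_norm_convolve_le hf hxg))

theorem ofReal_sq_mul_convolve_ae_eq (hf : Integrable f) (hg : Integrable g)
    (hxf : Integrable fun x : ℝ => (x : ℂ) * f x) (hxg : Integrable fun x : ℝ => (x : ℂ) * g x) :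
    (fun x : ℝ => (x : ℂ) ^ 2 * convolve f g x) =ᵐ[volume] fun x : ℝ =>
      (x : ℂ) * convolve (fun y : ℝ => (y : ℂ) * f y) g x +
        (x : ℂ) * convolve f (fun y : ℝ => (y : ℂ) * g y) x := by
  filter_upwards [ofReal_mul_convolve_ae_eq hf hg hxf hxg] with x hx
  rw [sq, mul_assoc, hx, mul_add]

theorem integrable_ofReal_sq_mul_convolve (hf : Integrable f) (hg : Integrable g)
    (hxf : Integrable fun x : ℝ => (x : ℂ) * f x) (hxg : Integrable fun x : ℝ => (x : ℂ) * g x)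
    (hx2f : Integrable fun x : ℝ => (x : ℂ) ^ 2 * f x)
    (hx2g : Integrable fun x : ℝ => (x : ℂ) ^ 2 * g x) :
    Integrable fun x : ℝ => (x : ℂ) ^ 2 * convolve f g x := by
  simp only [sq, mul_assoc] at hx2f hx2g
  exact ((integrable_ofReal_mul_convolve hxf hg hx2f hxg).add
    (integrable_ofReal_mul_convolve hf hxg hxf hx2g)).congr
    (ofReal_sq_mul_convolve_ae_eq hf hg hxf hxg).symm

theorem integral_norm_ofReal_sq_mul_convolve_le (hf : Integrable f) (hg : Integrable g)
    (hxf : Integrable fun x : ℝ => (x : ℂ) * f x) (hxg : Integrable fun x : ℝ => (x : ℂ) * g x)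
    (hx2f : Integrable fun x : ℝ => (x : ℂ) ^ 2 * f x)
    (hx2g : Integrable fun x : ℝ => (x : ℂ) ^ 2 * g x) :
    ∫ x : ℝ, ‖(x : ℂ) ^ 2 * convolve f g x‖ ≤
      (∫ x : ℝ, ‖(x : ℂ) ^ 2 * f x‖) * (∫ x, ‖g x‖) +
        2 * (∫ x : ℝ, ‖(x : ℂ) * f x‖) * (∫ x : ℝ, ‖(x : ℂ) * g x‖) +
        (∫ x, ‖f x‖) * ∫ x : ℝ, ‖(x : ℂ) ^ 2 * g x‖ := by
  simp only [sq, mul_assoc] at hx2f hx2g ⊢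
  have h₁ := integrable_ofReal_mul_convolve hxf hg hx2f hxg
  have h₂ := integrable_ofReal_mul_convolve hf hxg hxf hx2g
  have hae := ofReal_sq_mul_convolve_ae_eq hf hg hxf hxg
  simp only [sq, mul_assoc] at hae
  refine (integral_congr_ae (hae.fun_comp norm)).trans_le ((integral_norm_add_le h₁ h₂).trans ?_)
  linarith [integral_norm_ofReal_mul_convolve_le hxf hg hx2f hxg,
    integral_norm_ofReal_mul_convolve_le hf hxg hxf hx2g]

end Convolve

section Primitive

variable {k K : ℝ → ℂ}

theorem integrable_of_integrable_ofReal_mul {g : ℝ → ℂ} {C : ℝ} (hC : ∀ x, ‖g x‖ ≤ C)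
    (hxg : Integrable fun x : ℝ => (x : ℂ) * g x) : Integrable g := by
  have hg : AEStronglyMeasurable g volume := by
    refine ((Complex.measurable_ofReal.inv.aestronglyMeasurable).mul
      hxg.aestronglyMeasurable).congr ?_
    filter_upwards [compl_mem_ae_iff.2 (measure_singleton (0 : ℝ))] with x hx
    simp [inv_mul_cancel_left₀ (Complex.ofReal_ne_zero.2 hx)]
  have hI : Integrable ((Icc (-1 : ℝ) 1).indicator fun _ => C) :=
    (integrable_indicator_iff measurableSet_Icc).2 (integrableOn_const measure_Icc_lt_top.ne)
  refine (hxg.norm.add hI).mono' hg (Eventually.of_forall fun x => ?_)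
  simp only [Pi.add_apply, norm_mul, Complex.norm_real, Real.norm_eq_abs]
  by_cases hx : |x| ≤ 1
  · rw [indicator_of_mem (show x ∈ Icc (-1 : ℝ) 1 from abs_le.1 hx)]
    nlinarith [hC x, abs_nonneg x, norm_nonneg (g x)]
  · rw [indicator_of_notMem (show x ∉ Icc (-1 : ℝ) 1 from fun h => hx (abs_le.2 h))]
    nlinarith [norm_nonneg (g x)]

theorem integrable_of_eq_primitive {φ g : ℝ → ℂ} (hφ : Integrable φ)
    (hg : ∀ x, g x = ∫ t in Iic x, φ t) (hxg : Integrable fun x : ℝ => (x : ℂ) * g x) :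
    Integrable g :=
  integrable_of_integrable_ofReal_mul (fun x => (hg x).symm ▸
    (norm_integral_le_integral_norm _).trans
      (setIntegral_le_integral hφ.norm (Eventually.of_forall fun _ => norm_nonneg _))) hxg

theorem integrable_ofReal_mul_of_sq {φ : ℝ → ℂ} (hφ : Integrable φ)
    (hx2φ : Integrable fun x : ℝ => (x : ℂ) ^ 2 * φ x) :
    Integrable fun x : ℝ => (x : ℂ) * φ x := by
  refine (hφ.norm.add hx2φ.norm).mono'
    (Complex.continuous_ofReal.aestronglyMeasurable.mul hφ.aestronglyMeasurable)
    (Eventually.of_forall fun x => ?_)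
  simp only [Pi.add_apply, norm_mul, norm_pow, Complex.norm_real, Real.norm_eq_abs]
  nlinarith [norm_nonneg (φ x), mul_nonneg (sq_nonneg (|x| - 1)) (norm_nonneg (φ x))]

theorem eVariationOn_le_integral_norm_of_eq_primitive {h F : ℝ → ℂ} (hh : Integrable h)
    (hF : ∀ x, F x = ∫ t in Iic x, h t) :
    eVariationOn F univ ≤ ENNReal.ofReal (∫ t, ‖h t‖) := by
  refine iSup_le fun ⟨n, u, hu, _⟩ => ?_
  have hstep : ∀ i, u i ≤ u (i + 1) := fun i => hu (Nat.le_succ i)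
  calc ∑ i ∈ Finset.range n, edist (F (u (i + 1))) (F (u i))
      ≤ ∑ i ∈ Finset.range n, ENNReal.ofReal (∫ t in u i..u (i + 1), ‖h t‖) := by
        refine Finset.sum_le_sum fun i _ => ?_
        rw [edist_dist, dist_eq_norm, hF, hF,
          intervalIntegral.integral_Iic_sub_Iic hh.integrableOn hh.integrableOn]
        exact ENNReal.ofReal_le_ofReal (intervalIntegral.norm_integral_le_integral_norm (hstep i))
    _ = ENNReal.ofReal (∫ t in u 0..u n, ‖h t‖) := by
        rw [← ENNReal.ofReal_sum_of_nonneg fun i _ =>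
            intervalIntegral.integral_nonneg (hstep i) fun _ _ => norm_nonneg _,
          intervalIntegral.sum_integral_adjacent_intervals fun i _ => hh.norm.intervalIntegrable]
    _ ≤ ENNReal.ofReal (∫ t, ‖h t‖) := by
        rw [intervalIntegral.integral_of_le (hu (Nat.zero_le n))]
        exact ENNReal.ofReal_le_ofReal
          (setIntegral_le_integral hh.norm (Eventually.of_forall fun _ => norm_nonneg _))

theorem setIntegral_Iic_comp_sub_right (f : ℝ → ℂ) (x t : ℝ) :
    ∫ v in Iic x, f (v - t) = ∫ u in Iic (x - t), f u := by
  simpa only [preimage_sub_const_Iic, sub_add_cancel] using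
    (measurePreserving_sub_right volume t).setIntegral_preimage_emb
      (measurableEmbedding_subRight t) f (Iic (x - t))

theorem setIntegral_Iic_convolve {f g F : ℝ → ℂ} (hf : Integrable f) (hg : Integrable g)
    (hF : ∀ x, F x = ∫ t in Iic x, f t) (x : ℝ) :
    ∫ v in Iic x, convolve f g v = convolve F g x := by
  have hint : Integrable (fun p : ℝ × ℝ => f (p.1 - p.2) * g p.2)
      ((volume.restrict (Iic x)).prod volume) := by
    rw [Measure.restrict_prod_eq_prod_univ]
    exact (integrable_convolve_integrand hf hg).restrict
  simp only [convolve]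
  rw [integral_integral_swap hint]
  congr 1 with t
  rw [integral_mul_const, setIntegral_Iic_comp_sub_right, hF]

theorem setIntegral_Iic_indicator_Ici_const {E : Type*} [NormedAddCommGroup E]
    [NormedSpace ℝ E] [CompleteSpace E] (c : E) {t x : ℝ} (ht : t ≤ x) :
    ∫ v in Iic x, (Ici t).indicator (fun _ => c) v = (x - t) • c := by
  rw [integral_indicator_const c measurableSet_Ici, measureReal_restrict_apply measurableSet_Ici,
    Ici_inter_Iic, Real.volume_real_Icc_of_le ht]

theorem setIntegral_Iic_primitive (hk : Integrable k) (hxk : Integrable fun t : ℝ => (t : ℂ) * k t)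
    (hK : ∀ x, K x = ∫ t in Iic x, k t) (x : ℝ) :
    IntegrableOn K (Iic x) ∧ ∫ v in Iic x, K v = ∫ t in Iic x, ((x : ℂ) - t) * k t := by
  set F : ℝ × ℝ → ℂ := {p : ℝ × ℝ | p.2 ≤ p.1}.indicator fun p => k p.2 with hF_def
  have hF_left : ∀ v ∈ Iic x, ∫ t in Iic x, F (v, t) = K v := by
    intro v hv
    have : (fun t => F (v, t)) = (Iic v).indicator k := by
      ext t; by_cases h : t ≤ v <;> simp [hF_def, h]
    rw [this, integral_indicator measurableSet_Iic, Measure.restrict_restrict measurableSet_Iic,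
      Iic_inter_Iic, min_eq_left hv, hK]
  have hF_right : ∀ t v, F (v, t) = (Ici t).indicator (fun _ => k t) v := by
    intro t v; by_cases h : t ≤ v <;> simp [hF_def, h]
  have hF_meas : AEStronglyMeasurable F
      ((volume.restrict (Iic x)).prod (volume.restrict (Iic x))) :=
    (hk.aestronglyMeasurable.restrict.comp_snd).indicator
      (measurableSet_le measurable_snd measurable_fst)
  have hF : Integrable F ((volume.restrict (Iic x)).prod (volume.restrict (Iic x))) := by
    refine (integrable_prod_iff' hF_meas).2 ⟨Eventually.of_forall fun t => ?_, ?_⟩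
    · simp only [hF_right]
      rw [integrable_indicator_iff measurableSet_Ici]
      refine integrableOn_const ?_
      rw [Measure.restrict_apply measurableSet_Ici, Ici_inter_Iic]
      exact measure_Icc_lt_top.ne
    · refine ((hk.const_mul x).sub hxk).norm.restrict.congr
        ((ae_restrict_iff' measurableSet_Iic).2 (Eventually.of_forall fun t ht => ?_))
      change ‖(x : ℂ) * k t - t * k t‖ = ∫ v in Iic x, ‖F (v, t)‖
      simp only [hF_right, norm_indicator_eq_indicator_norm]
      rw [setIntegral_Iic_indicator_Ici_const _ ht, ← sub_mul, ← Complex.ofReal_sub, norm_mul,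
        Complex.norm_real, Real.norm_of_nonneg (sub_nonneg.2 ht), smul_eq_mul]
  refine ⟨hF.integral_prod_left.congr ((ae_restrict_iff' measurableSet_Iic).2
    (Eventually.of_forall hF_left)), ?_⟩
  calc ∫ v in Iic x, K v = ∫ v in Iic x, ∫ t in Iic x, F (v, t) :=
        (setIntegral_congr_fun measurableSet_Iic hF_left).symm
    _ = ∫ t in Iic x, ∫ v in Iic x, F (v, t) := integral_integral_swap hF
    _ = ∫ t in Iic x, ((x : ℂ) - t) * k t := by
        refine setIntegral_congr_fun measurableSet_Iic fun t ht => ?_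
        simp only [hF_right]
        rw [setIntegral_Iic_indicator_Ici_const _ ht, Complex.real_smul]
        push_cast
        ring

theorem ofReal_mul_eq_setIntegral_Iic (hk : Integrable k)
    (hxk : Integrable fun t : ℝ => (t : ℂ) * k t) (hK : ∀ x, K x = ∫ t in Iic x, k t) (x : ℝ) :
    (x : ℂ) * K x = ∫ v in Iic x, (K v + v * k v) := by
  obtain ⟨hKx, hK_int⟩ := setIntegral_Iic_primitive hk hxk hK x
  have hxk' : IntegrableOn (fun t : ℝ => ((x : ℂ) - t) * k t) (Iic x) :=
    (((hk.const_mul x).sub hxk).congr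
      (Eventually.of_forall fun t => (sub_mul _ _ _).symm)).integrableOn
  rw [integral_add hKx hxk.integrableOn, hK_int, hK, ← integral_const_mul,
    ← integral_add hxk' hxk.integrableOn]
  congr 1 with t
  ring

theorem eVariationOn_ofReal_mul_primitive_le (hk : Integrable k)
    (hxk : Integrable fun t : ℝ => (t : ℂ) * k t) (hKi : Integrable K)
    (hK : ∀ x, K x = ∫ t in Iic x, k t) :
    eVariationOn (fun x : ℝ => (x : ℂ) * K x) univ ≤
      ENNReal.ofReal ((∫ x, ‖K x‖) + ∫ x : ℝ, ‖(x : ℂ) * k x‖) :=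
  (eVariationOn_le_integral_norm_of_eq_primitive (hKi.add hxk)
    (ofReal_mul_eq_setIntegral_Iic hk hxk hK)).trans
    (ENNReal.ofReal_le_ofReal (integral_norm_add_le hKi hxk))

theorem eVariationOn_ofReal_sq_mul_primitive_le (hk : Integrable k)
    (hxk : Integrable fun t : ℝ => (t : ℂ) * k t) (hx2k : Integrable fun t : ℝ => (t : ℂ) ^ 2 * k t)
    (hKi : Integrable K) (hxK : Integrable fun t : ℝ => (t : ℂ) * K t)
    (hK : ∀ x, K x = ∫ t in Iic x, k t) :
    eVariationOn (fun x : ℝ => (x : ℂ) ^ 2 * K x) univ ≤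
      ENNReal.ofReal (2 * (∫ x : ℝ, ‖(x : ℂ) * K x‖) + ∫ x : ℝ, ‖(x : ℂ) ^ 2 * k x‖) := by
  have hsq : ∀ x : ℝ, (x : ℂ) * (K x + x * k x) = x * K x + x ^ 2 * k x := fun x => by ring
  have hx_deriv : Integrable fun x : ℝ => (x : ℂ) * (K x + x * k x) := by
    simpa only [hsq] using hxK.fun_add hx2k
  rw [show (fun x : ℝ => (x : ℂ) ^ 2 * K x) = fun x : ℝ => (x : ℂ) * (x * K x) by ext; ring]
  refine (eVariationOn_ofReal_mul_primitive_le (hKi.fun_add hxk) hx_deriv hxK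
    (ofReal_mul_eq_setIntegral_Iic hk hxk hK)).trans (ENNReal.ofReal_le_ofReal ?_)
  simp only [hsq]
  linarith [integral_norm_add_le hxK hx2k]

end Primitive

theorem stmt17 (φ₁ φ₂ : ℝ → ℂ) (h₁ : Integrable φ₁) (h₂ : Integrable φ₂)
    (g₁ g₂ : ℝ → ℂ)
    (hg₁ : ∀ x : ℝ, g₁ x = ∫ t in Set.Iic x, φ₁ t)
    (hg₂ : ∀ x : ℝ, g₂ x = ∫ t in Set.Iic x, φ₂ t)
    (hxg₁ : Integrable (fun x : ℝ => (x:ℂ) * g₁ x))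
    (hxg₂ : Integrable (fun x : ℝ => (x:ℂ) * g₂ x))
    (ht₁ : Integrable (fun t : ℝ => (t:ℂ)^2 * φ₁ t))
    (ht₂ : Integrable (fun t : ℝ => (t:ℂ)^2 * φ₂ t)) :
    (∀ x : ℝ, (∫ t : ℝ, g₁ (x - t) * g₂ t)
        = ∫ w in Set.Iic x, ∫ t : ℝ, g₁ (w - t) * φ₂ t) ∧
    eVariationOn (fun x : ℝ => (x:ℂ) * ∫ t : ℝ, g₁ (x - t) * g₂ t) Set.univ
      ≤ ENNReal.ofReal ((∫ x : ℝ, ‖(x:ℂ) * g₁ x‖) * (∫ t : ℝ, ‖φ₂ t‖)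
          + (∫ x : ℝ, ‖g₁ x‖) * (∫ t : ℝ, ‖(t:ℂ) * φ₂ t‖)
          + (∫ x : ℝ, ‖g₁ x‖) * (∫ x : ℝ, ‖g₂ x‖)) ∧
    eVariationOn (fun x : ℝ => (x:ℂ)^2 * ∫ t : ℝ, g₁ (x - t) * φ₂ t) Set.univ
      ≤ ENNReal.ofReal (2*(∫ x : ℝ, ‖(x:ℂ) * g₁ x‖) * (∫ t : ℝ, ‖φ₂ t‖)
          + 2*(∫ x : ℝ, ‖g₁ x‖) * (∫ t : ℝ, ‖(t:ℂ) * φ₂ t‖)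
          + (∫ t : ℝ, ‖(t:ℂ)^2 * φ₁ t‖) * (∫ t : ℝ, ‖φ₂ t‖)
          + 2*(∫ t : ℝ, ‖(t:ℂ) * φ₁ t‖) * (∫ t : ℝ, ‖(t:ℂ) * φ₂ t‖)
          + (∫ t : ℝ, ‖φ₁ t‖) * (∫ t : ℝ, ‖(t:ℂ)^2 * φ₂ t‖)) := by
  have hg₁i := integrable_of_eq_primitive h₁ hg₁ hxg₁
  have hg₂i := integrable_of_eq_primitive h₂ hg₂ hxg₂
  have hxφ₁ := integrable_ofReal_mul_of_sq h₁ ht₁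
  have hxφ₂ := integrable_ofReal_mul_of_sq h₂ ht₂
  have hg : ∀ x, convolve g₁ g₂ x = ∫ w in Iic x, convolve g₁ φ₂ w := fun x => by
    simp only [convolve_comm g₁, setIntegral_Iic_convolve h₂ hg₁i hg₂]
  have hk : ∀ x, convolve g₁ φ₂ x = ∫ w in Iic x, convolve φ₁ φ₂ w := fun x =>
    (setIntegral_Iic_convolve h₁ h₂ hg₁ x).symm
  have hxk_le := integral_norm_ofReal_mul_convolve_le hg₁i h₂ hxg₁ hxφ₂
  have hx2m_le := integral_norm_ofReal_sq_mul_convolve_le h₁ h₂ hxφ₁ hxφ₂ ht₁ ht₂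
  refine ⟨hg, ?_, ?_⟩
  · refine (eVariationOn_ofReal_mul_primitive_le (hg₁i.convolve h₂)
      (integrable_ofReal_mul_convolve hg₁i h₂ hxg₁ hxφ₂) (hg₁i.convolve hg₂i) hg).trans
      (ENNReal.ofReal_le_ofReal ?_)
    linarith [integral_norm_convolve_le hg₁i hg₂i]
  · refine (eVariationOn_ofReal_sq_mul_primitive_le (h₁.convolve h₂)
      (integrable_ofReal_mul_convolve h₁ h₂ hxφ₁ hxφ₂)
      (integrable_ofReal_sq_mul_convolve h₁ h₂ hxφ₁ hxφ₂ ht₁ ht₂) (hg₁i.convolve h₂)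
      (integrable_ofReal_mul_convolve hg₁i h₂ hxg₁ hxφ₂) hk).trans (ENNReal.ofReal_le_ofReal ?_)
    linarith
end
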